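/- Let ω₂ be a majorant satisfying the Hardy–Littlewood condition and ψ ∈ 𝓛_{ω₂}(𝕋) with seminorm L. Then there is a constant M > 0 such that for all z₁, z₂ ∈ 𝔻 with |z₁| = |z₂|, |Q[ψ](z₁) - Q[ψ](z₂)| ≤ M·L·ω₂(|z₁ - z₂|). -/

import Mathlib

open Complex

/-- `Q[ψ](z) = (1/2π)∫₀^{2π} z̄ e^{it} ψ(e^{it}) (1-|z|²)/(1-z̄e^{it})² dt`. -/
noncomputable def Qop (ψ : ℂ → ℂ) (z : ℂ) : ℂ :=
  (1 / (2 * Real.pi)) • ∫ t in (0:ℝ)..(2 * Real.pi),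
    (starRingEnd ℂ) z * Complex.exp (t * Complex.I) * ψ (Complex.exp (t * Complex.I)) *
      ((1 - ‖z‖ ^ 2 : ℝ) : ℂ) /
        (1 - (starRingEnd ℂ) z * Complex.exp (t * Complex.I)) ^ 2

/-!
Write `z₂ = z₁ u` with `‖u‖ = 1`. Shifting the angle by `arg u` turns `Q[ψ](z₂)` into
`Q[ψ(· u)](z₁)`, so `Q[ψ](z₁) - Q[ψ](z₂)` is `Q` applied to `w ↦ ψ w - ψ (w u)`, which is
bounded by `L ω₂ ‖1 - u‖` on the circle. The kernel of `Q` has modulus `‖z‖` times the Poisson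
kernel, whose circle average is `1`; this gives the bound `‖z₁‖ L ω₂ ‖1 - u‖`, and since
`ω₂ t / t` is nonincreasing it is at most `L ω₂ (‖z₁‖ ‖1 - u‖) = L ω₂ ‖z₁ - z₂‖`.
-/

open ComplexConjugate Metric

theorem ContinuousOn.of_dist_le_modulus {X Y : Type*} [PseudoMetricSpace X]
    [PseudoMetricSpace Y] {f : X → Y} {s : Set X} {ω : ℝ → ℝ} {L : ℝ}
    (hω : ContinuousWithinAt ω (Set.Ici 0) 0) (hω0 : ω 0 = 0)
    (hf : ∀ x ∈ s, ∀ y ∈ s, dist (f x) (f y) ≤ L * ω (dist x y)) :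
    ContinuousOn f s := by
  intro x hx
  rw [ContinuousWithinAt, tendsto_iff_dist_tendsto_zero]
  have hdist :
      Filter.Tendsto (fun y => dist y x) (nhdsWithin x s) (nhdsWithin 0 (Set.Ici 0)) :=
    tendsto_nhdsWithin_iff.2
      ⟨tendsto_iff_dist_tendsto_zero.1 (Filter.tendsto_id.mono_left nhdsWithin_le_nhds),
        Filter.Eventually.of_forall fun y => dist_nonneg⟩
  have hmod : Filter.Tendsto (fun y => L * ω (dist y x)) (nhdsWithin x s) (nhds 0) := by
    simpa [hω0] using ((hω.tendsto.comp hdist).const_mul L)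
  exact squeeze_zero' (Filter.Eventually.of_forall fun y => dist_nonneg)
    (eventually_nhdsWithin_of_forall fun y hy => hf y hy x hx) hmod

theorem norm_circleAverage_le {E : Type*} [NormedAddCommGroup E] [NormedSpace ℝ E]
    {f : ℂ → E} {g : ℂ → ℝ} {c : ℂ} {R : ℝ} (hg : CircleIntegrable g c R)
    (hfg : ∀ z ∈ sphere c |R|, ‖f z‖ ≤ g z) :
    ‖Real.circleAverage f c R‖ ≤ Real.circleAverage g c R := by
  rw [Real.circleAverage, Real.circleAverage, norm_smul, smul_eq_mul, Real.norm_eq_abs,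
    abs_of_pos (inv_pos.2 Real.two_pi_pos)]
  gcongr
  exact intervalIntegral.norm_integral_le_of_norm_le Real.two_pi_pos.le
    (Filter.Eventually.of_forall fun θ _ => hfg _ (circleMap_mem_sphere' c R θ)) hg

theorem circleAverage_poissonKernel {c w : ℂ} {R : ℝ} (hw : w ∈ ball c R) :
    Real.circleAverage (poissonKernel c w) c R = 1 := by
  simpa [Pi.mul_def] using
    InnerProductSpace.HarmonicContOnCl.circleAverage_poissonKernel_smul
      (InnerProductSpace.harmonicContOnCl_const (c := (1 : ℝ))) hw

theorem norm_one_sub_conj_mul {z w : ℂ} (hw : ‖w‖ = 1) :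
    ‖1 - conj z * w‖ = ‖w - z‖ := by
  have hww : conj w * w = 1 := by rw [conj_mul', hw]; norm_num
  calc ‖1 - conj z * w‖ = ‖w * conj (w - z)‖ := by
        congr 1; rw [map_sub]; linear_combination -hww
    _ = ‖w - z‖ := by rw [norm_mul, hw, one_mul, Complex.norm_conj]

noncomputable def qKernel (z w : ℂ) : ℂ :=
  conj z * w * ((1 - ‖z‖ ^ 2 : ℝ) : ℂ) / (1 - conj z * w) ^ 2

theorem Qop_eq_circleAverage (ψ : ℂ → ℂ) (z : ℂ) :
    Qop ψ z = Real.circleAverage (fun w => qKernel z w * ψ w) 0 1 := by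
  simp only [Qop, Real.circleAverage, qKernel, circleMap, one_div, zero_add, Complex.ofReal_one,
    one_mul]
  congr 1
  refine intervalIntegral.integral_congr fun t _ => ?_
  ring

theorem norm_qKernel {z w : ℂ} (hz : ‖z‖ ≤ 1) (hw : ‖w‖ = 1) :
    ‖qKernel z w‖ = ‖z‖ * poissonKernel 0 z w := by
  have hz2 : 0 ≤ 1 - ‖z‖ ^ 2 := by nlinarith [norm_nonneg z]
  rw [qKernel, norm_div, norm_mul, norm_mul, norm_pow, norm_one_sub_conj_mul hw,
    Complex.norm_conj, hw, Complex.norm_real, Real.norm_of_nonneg hz2, poissonKernel, sub_zero,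
    sub_zero, hw]
  ring

theorem continuousOn_qKernel {z : ℂ} (hz : ‖z‖ < 1) :
    ContinuousOn (qKernel z) (sphere 0 1) := by
  refine ContinuousOn.div (by fun_prop) (by fun_prop) fun w hw => pow_ne_zero 2 ?_
  rw [mem_sphere_zero_iff_norm] at hw
  rw [← norm_ne_zero_iff, norm_one_sub_conj_mul hw, norm_ne_zero_iff, sub_ne_zero]
  rintro rfl
  exact hz.ne hw

theorem qKernel_mul_mul {z w u : ℂ} (hu : ‖u‖ = 1) :
    qKernel (z * u) (w * u) = qKernel z w := by
  have huu : conj u * u = 1 := by rw [conj_mul', hu]; norm_num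
  have hzu : conj (z * u) * (w * u) = conj z * w := by
    rw [map_mul]; linear_combination conj z * w * huu
  rw [qKernel, qKernel, hzu, norm_mul, hu, mul_one]

theorem Qop_mul_of_norm_eq_one (ψ : ℂ → ℂ) (z : ℂ) {u : ℂ} (hu : ‖u‖ = 1) :
    Qop ψ (z * u) = Qop (fun w => ψ (w * u)) z := by
  have hrot : ∀ θ, circleMap 0 1 (θ + arg u) = circleMap 0 1 θ * u := fun θ => by
    conv_rhs => rw [← Complex.norm_mul_exp_arg_mul_I u, hu]
    simp only [circleMap, zero_add, Complex.ofReal_one, one_mul, Complex.ofReal_add, add_mul,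
      Complex.exp_add]
  rw [Qop_eq_circleAverage, Qop_eq_circleAverage, Real.circleAverage_eq_integral_add (arg u),
    Real.circleAverage]
  simp only [hrot, qKernel_mul_mul hu]

theorem Qop_sub {ψ φ : ℂ → ℂ} {z : ℂ} (hz : ‖z‖ < 1)
    (hψ : ContinuousOn ψ (sphere 0 1)) (hφ : ContinuousOn φ (sphere 0 1)) :
    Qop ψ z - Qop φ z = Qop (fun w => ψ w - φ w) z := by
  have hint : ∀ {χ : ℂ → ℂ}, ContinuousOn χ (sphere 0 1) →
      CircleIntegrable (fun w => qKernel z w * χ w) 0 1 := fun hχ =>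
    ((continuousOn_qKernel hz).mul hχ).circleIntegrable zero_le_one
  simp only [Qop_eq_circleAverage, mul_sub]
  exact (Real.circleAverage_fun_sub (hint hψ) (hint hφ)).symm

theorem Qop_sub_Qop_mul {ψ : ℂ → ℂ} {z u : ℂ} (hz : ‖z‖ < 1) (hu : ‖u‖ = 1)
    (hψ : ContinuousOn ψ (sphere 0 1)) :
    Qop ψ z - Qop ψ (z * u) = Qop (fun w => ψ w - ψ (w * u)) z := by
  rw [Qop_mul_of_norm_eq_one ψ z hu]
  refine Qop_sub hz hψ (hψ.comp (continuous_mul_const u).continuousOn fun w hw => ?_)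
  rw [mem_sphere_zero_iff_norm] at hw ⊢
  rw [norm_mul, hw, hu, one_mul]

theorem norm_Qop_le {φ : ℂ → ℂ} {z : ℂ} {B : ℝ} (hz : ‖z‖ < 1)
    (hφ : ∀ w, ‖w‖ = 1 → ‖φ w‖ ≤ B) : ‖Qop φ z‖ ≤ ‖z‖ * B := by
  have hP : ContinuousOn (poissonKernel 0 z) (sphere 0 1) := by
    refine ContinuousOn.div (by fun_prop) (by fun_prop) fun w hw => ?_
    rw [mem_sphere_zero_iff_norm] at hw
    rw [sub_zero, sub_zero, pow_ne_zero_iff two_ne_zero, norm_ne_zero_iff, sub_ne_zero]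
    rintro rfl
    exact hz.ne hw
  calc ‖Qop φ z‖
      ≤ Real.circleAverage (fun w => (‖z‖ * B) • poissonKernel 0 z w) 0 1 := by
        rw [Qop_eq_circleAverage]
        refine norm_circleAverage_le ((hP.const_smul (‖z‖ * B)).circleIntegrable zero_le_one)
          fun w hw => ?_
        rw [abs_one, mem_sphere_zero_iff_norm] at hw
        have hP0 : 0 ≤ poissonKernel 0 z w := by
          rw [poissonKernel, sub_zero, sub_zero, hw]
          exact div_nonneg (by nlinarith [norm_nonneg z]) (sq_nonneg _)
        rw [norm_mul, norm_qKernel hz.le hw, smul_eq_mul, mul_right_comm]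
        gcongr
        exact hφ w hw
    _ = ‖z‖ * B := by
        rw [Real.circleAverage_fun_smul, circleAverage_poissonKernel (by simpa using hz),
          smul_eq_mul, mul_one]

theorem mul_le_apply_mul_of_antitoneOn_div {ω : ℝ → ℝ}
    (hω : AntitoneOn (fun t => ω t / t) (Set.Ioi 0)) {r d : ℝ} (hr0 : 0 < r) (hr1 : r ≤ 1)
    (hd : 0 < d) : r * ω d ≤ ω (r * d) := by
  have hrd : 0 < r * d := mul_pos hr0 hd
  have h := hω hrd hd (mul_le_of_le_one_left hd.le hr1)
  rw [div_le_div_iff₀ hd hrd] at h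
  nlinarith

theorem Qop_equal_modulus_lipschitz_general (ω₂ : ℝ → ℝ)
    (hcont : ContinuousOn ω₂ (Set.Ici 0))
    (h0 : ω₂ 0 = 0)
    (hanti : AntitoneOn (fun t => ω₂ t / t) (Set.Ioi 0))
    (ψ : ℂ → ℂ) (L : ℝ) (hL : 0 ≤ L)
    (hψ : ∀ ξ ζ : ℂ, ‖ξ‖ = 1 → ‖ζ‖ = 1 →
      ‖ψ ξ - ψ ζ‖ ≤ L * ω₂ (‖ξ - ζ‖))
    :
    ∃ M : ℝ, 0 < M ∧ ∀ z₁ z₂ : ℂ, ‖z₁‖ < 1 → ‖z₂‖ < 1 →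
      ‖z₁‖ = ‖z₂‖ →
      ‖Qop ψ z₁ - Qop ψ z₂‖ ≤ M * L * ω₂ (‖z₁ - z₂‖) := by
  refine ⟨1, one_pos, fun z₁ z₂ hz₁ _ hnorm => ?_⟩
  rcases eq_or_ne z₁ z₂ with rfl | hne
  · simp [h0]
  have hz₁0 : z₁ ≠ 0 := by
    rintro rfl
    exact hne (norm_eq_zero.1 (by rw [← hnorm, norm_zero])).symm
  obtain ⟨u, hu, rfl⟩ : ∃ u, ‖u‖ = 1 ∧ z₂ = z₁ * u :=
    ⟨z₂ / z₁, by rw [norm_div, ← hnorm, div_self (norm_ne_zero_iff.2 hz₁0)],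
      (mul_div_cancel₀ z₂ hz₁0).symm⟩
  have hu1 : 0 < ‖1 - u‖ := norm_pos_iff.2 (sub_ne_zero.2 fun h => hne (by rw [← h, mul_one]))
  have hψc : ContinuousOn ψ (sphere 0 1) :=
    ContinuousOn.of_dist_le_modulus (hcont 0 Set.self_mem_Ici) h0 fun ξ hξ ζ hζ => by
      rw [mem_sphere_zero_iff_norm] at hξ hζ
      simpa only [dist_eq_norm] using hψ ξ ζ hξ hζ
  have hrot : ∀ w, ‖w‖ = 1 → ‖ψ w - ψ (w * u)‖ ≤ L * ω₂ ‖1 - u‖ := by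
    intro w hw
    have hwu : ‖w - w * u‖ = ‖1 - u‖ := by rw [← mul_one_sub, norm_mul, hw, one_mul]
    simpa only [hwu] using hψ w (w * u) hw (by rw [norm_mul, hw, hu, one_mul])
  calc ‖Qop ψ z₁ - Qop ψ (z₁ * u)‖
      ≤ ‖z₁‖ * (L * ω₂ ‖1 - u‖) := by
        rw [Qop_sub_Qop_mul hz₁ hu hψc]
        exact norm_Qop_le hz₁ hrot
    _ = L * (‖z₁‖ * ω₂ ‖1 - u‖) := by ring
    _ ≤ L * ω₂ (‖z₁‖ * ‖1 - u‖) := by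
        gcongr
        exact mul_le_apply_mul_of_antitoneOn_div hanti (norm_pos_iff.2 hz₁0) hz₁.le hu1
    _ = 1 * L * ω₂ ‖z₁ - z₁ * u‖ := by rw [← mul_one_sub, norm_mul, one_mul]

/-- Lemma 2.5: equal-modulus Lipschitz estimate for `Q[ψ]`:
`|Q[ψ](z₁) - Q[ψ](z₂)| ≤ M L ω₂(|z₁ - z₂|)` for `z₁, z₂ ∈ 𝔻` with `|z₁| = |z₂|`. -/
theorem Qop_equal_modulus_lipschitz (ω₂ : ℝ → ℝ)
    (hcont : ContinuousOn ω₂ (Set.Ici 0))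
    (hmono : MonotoneOn ω₂ (Set.Ici 0))
    (hnonneg : ∀ t, 0 ≤ t → 0 ≤ ω₂ t)
    (h0 : ω₂ 0 = 0)
    (hanti : AntitoneOn (fun t => ω₂ t / t) (Set.Ioi 0))
    (M₀ : ℝ) (hM₀ : 0 < M₀)
    (hHL : ∀ lam : ℝ, lam ∈ Set.Ioc 0 Real.pi →
      lam * ∫ t in lam..Real.pi, ω₂ t / t ^ 2 ≤ M₀ * ω₂ lam)
    (ψ : ℂ → ℂ) (L : ℝ) (hL : 0 ≤ L)
    (hψ : ∀ ξ ζ : ℂ, ‖ξ‖ = 1 → ‖ζ‖ = 1 →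
      ‖ψ ξ - ψ ζ‖ ≤ L * ω₂ (‖ξ - ζ‖))
    :
    ∃ M : ℝ, 0 < M ∧ ∀ z₁ z₂ : ℂ, ‖z₁‖ < 1 → ‖z₂‖ < 1 →
      ‖z₁‖ = ‖z₂‖ →
      ‖Qop ψ z₁ - Qop ψ z₂‖ ≤ M * L * ω₂ (‖z₁ - z₂‖) :=
  Qop_equal_modulus_lipschitz_general ω₂ hcont h0 hanti ψ L hL hψ
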